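/- For k \geq 1, in a Best-of-(2k+1) game with A serving first, the probability that A wins under the Standard Rule equals the probability that A wins under the Catch-Up Rule. -/

import Mathlib

/-- Win probability for player `A` in a service game played to `goal` points.
`next prevSrv aWon` gives the next server (`true` = A serves). `srv = true` means
A serves the current point; A wins on his serve with probability `p`, B wins on her
serve with probability `q`. `fuel` bounds the number of points played. -/
def winProb (p q : ℝ) (goal : ℕ) (next : Bool → Bool → Bool) :
    ℕ → ℕ → ℕ → Bool → ℝ
  | 0, _, _, _ => 0
  | fuel + 1, x, y, srv =>
    if goal ≤ x then 1
    else if goal ≤ y then 0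
    else
      (if srv then p else 1 - q) * winProb p q goal next fuel (x + 1) y (next srv true) +
        (1 - if srv then p else 1 - q) * winProb p q goal next fuel x (y + 1) (next srv false)

/-- Standard Rule: the winner of the point serves next. -/
def nextSR : Bool → Bool → Bool := fun _ aWon => aWon

/-- Catch-Up Rule: the loser of the point serves next. -/
def nextCR : Bool → Bool → Bool := fun _ aWon => !aWon

/-!
Let `P(a, b, t)` be the probability that at least `t` of `a` independent trials with success
probability `p` and `b` with success probability `1 - q` succeed. It does not depend on the
order of the trials, so it can be expanded on a `p`-trial or on a `(1 - q)`-trial first, and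
these two expansions are exactly the one-point recurrences of the game with A or B serving.
By matching recurrences, when A still needs `r + 1` points and B needs `s + 1`, A's win
probability with A serving is `P(r + 1, s, r + 1)` under SR and `P(s + 1, r, r + 1)` under CR.
At the start of a Best-of-(2k+1) game `r = s = k`, and both are `P(k + 1, k, k + 1)`.
-/

section ProbAtLeast

variable {R : Type*} [CommRing R] (u v : R)

/-- The probability that at least `t` of `a` independent trials with success probability `u`
and `b` with success probability `v` succeed, expanded on the `u`-trials first. -/
def probAtLeast : ℕ → ℕ → ℕ → R
  | _, _, 0 => 1
  | 0, 0, _ + 1 => 0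
  | a + 1, b, t + 1 => u * probAtLeast a b t + (1 - u) * probAtLeast a b (t + 1)
  | 0, b + 1, t + 1 => v * probAtLeast 0 b t + (1 - v) * probAtLeast 0 b (t + 1)
  termination_by a b _ => a + b

variable {u v}

@[simp]
theorem probAtLeast_zero (a b : ℕ) : probAtLeast u v a b 0 = 1 := by
  cases a <;> cases b <;> simp [probAtLeast]

theorem probAtLeast_peel_u (a b t : ℕ) :
    probAtLeast u v (a + 1) b (t + 1) =
      u * probAtLeast u v a b t + (1 - u) * probAtLeast u v a b (t + 1) := by
  rw [probAtLeast]

theorem probAtLeast_eq_zero_of_lt {a b t : ℕ} (h : a + b < t) : probAtLeast u v a b t = 0 := by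
  induction a generalizing t with
  | zero =>
    induction b generalizing t with
    | zero =>
      obtain ⟨t, rfl⟩ : ∃ t', t = t' + 1 := ⟨t - 1, by omega⟩
      rw [probAtLeast]
    | succ b ih =>
      obtain ⟨t, rfl⟩ : ∃ t', t = t' + 1 := ⟨t - 1, by omega⟩
      rw [probAtLeast, ih (by omega), ih (by omega), mul_zero, mul_zero, add_zero]
  | succ a ih =>
    obtain ⟨t, rfl⟩ : ∃ t', t = t' + 1 := ⟨t - 1, by omega⟩
    rw [probAtLeast_peel_u, ih (by omega), ih (by omega), mul_zero, mul_zero, add_zero]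

theorem probAtLeast_peel_v (a b t : ℕ) :
    probAtLeast u v a (b + 1) (t + 1) =
      v * probAtLeast u v a b t + (1 - v) * probAtLeast u v a b (t + 1) := by
  induction a generalizing t with
  | zero => rw [probAtLeast]
  | succ a ih =>
    cases t with
    | zero =>
      rw [probAtLeast_peel_u, probAtLeast_zero, ih, probAtLeast_peel_u a b 0]
      simp only [probAtLeast_zero]
      ring
    | succ t =>
      rw [probAtLeast_peel_u, ih, ih, probAtLeast_peel_u a b t,
        probAtLeast_peel_u a b (t + 1)]
      ring

end ProbAtLeast

section WinProb

variable {p q : ℝ} {goal : ℕ} {next : Bool → Bool → Bool}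

theorem winProb_of_goal_le_left {fuel x y : ℕ} {srv : Bool} (hfuel : fuel ≠ 0)
    (hx : goal ≤ x) : winProb p q goal next fuel x y srv = 1 := by
  obtain ⟨fuel, rfl⟩ := Nat.exists_eq_succ_of_ne_zero hfuel
  simp [winProb, hx]

theorem winProb_of_goal_le_right {fuel x y : ℕ} {srv : Bool} (hfuel : fuel ≠ 0)
    (hx : x < goal) (hy : goal ≤ y) : winProb p q goal next fuel x y srv = 0 := by
  obtain ⟨fuel, rfl⟩ := Nat.exists_eq_succ_of_ne_zero hfuel
  simp [winProb, hy, hx.not_ge]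

theorem winProb_succ_of_lt {fuel x y : ℕ} {srv : Bool} (hx : x < goal) (hy : y < goal) :
    winProb p q goal next (fuel + 1) x y srv =
      (if srv then p else 1 - q) * winProb p q goal next fuel (x + 1) y (next srv true) +
        (1 - if srv then p else 1 - q) * winProb p q goal next fuel x (y + 1) (next srv false) := by
  rw [winProb, if_neg hx.not_ge, if_neg hy.not_ge]

theorem winProb_nextSR {fuel r s x y : ℕ} (hx : x + (r + 1) = goal) (hy : y + (s + 1) = goal)
    (hfuel : r + s + 2 ≤ fuel) :
    winProb p q goal nextSR fuel x y true = probAtLeast p (1 - q) (r + 1) s (r + 1) ∧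
      winProb p q goal nextSR fuel x y false = probAtLeast p (1 - q) r (s + 1) (r + 1) := by
  induction fuel generalizing r s x y with
  | zero => omega
  | succ fuel ih =>
    have hAwins : winProb p q goal nextSR fuel (x + 1) y true = probAtLeast p (1 - q) r s r := by
      cases r with
      | zero => rw [winProb_of_goal_le_left (by omega) (by omega), probAtLeast_zero]
      | succ r => exact (ih (by omega) hy (by omega)).1
    have hBwins :
        winProb p q goal nextSR fuel x (y + 1) false = probAtLeast p (1 - q) r s (r + 1) := by
      cases s with
      | zero =>
        rw [winProb_of_goal_le_right (by omega) (by omega) (by omega),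
          probAtLeast_eq_zero_of_lt (by omega)]
      | succ s => exact (ih hx (by omega) (by omega)).2
    simp only [winProb_succ_of_lt (show x < goal by omega) (show y < goal by omega),
      nextSR, hAwins, hBwins, probAtLeast_peel_u, probAtLeast_peel_v, Bool.false_eq_true, if_true,
      if_false, sub_sub_cancel, and_self]

theorem winProb_nextCR {fuel r s x y : ℕ} (hx : x + (r + 1) = goal) (hy : y + (s + 1) = goal)
    (hfuel : r + s + 2 ≤ fuel) :
    winProb p q goal nextCR fuel x y true = probAtLeast p (1 - q) (s + 1) r (r + 1) ∧
      winProb p q goal nextCR fuel x y false = probAtLeast p (1 - q) s (r + 1) (r + 1) := by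
  induction fuel generalizing r s x y with
  | zero => omega
  | succ fuel ih =>
    have hAwins : winProb p q goal nextCR fuel (x + 1) y false = probAtLeast p (1 - q) s r r := by
      cases r with
      | zero => rw [winProb_of_goal_le_left (by omega) (by omega), probAtLeast_zero]
      | succ r => exact (ih (by omega) hy (by omega)).2
    have hBwins :
        winProb p q goal nextCR fuel x (y + 1) true = probAtLeast p (1 - q) s r (r + 1) := by
      cases s with
      | zero =>
        rw [winProb_of_goal_le_right (by omega) (by omega) (by omega),
          probAtLeast_eq_zero_of_lt (by omega)]
      | succ s => exact (ih hx (by omega) (by omega)).1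
    simp only [winProb_succ_of_lt (show x < goal by omega) (show y < goal by omega),
      nextCR, Bool.not_true, Bool.not_false, hAwins, hBwins, probAtLeast_peel_u,
      probAtLeast_peel_v, Bool.false_eq_true, if_true, if_false, sub_sub_cancel, and_self]

end WinProb

theorem SR_eq_CR_winProb_general (k : ℕ) (p q : ℝ) :
    winProb p q (k + 1) nextSR (2 * k + 2) 0 0 true
      = winProb p q (k + 1) nextCR (2 * k + 2) 0 0 true := by
  rw [(winProb_nextSR (r := k) (s := k) (by omega) (by omega) (by omega)).1,
    (winProb_nextCR (r := k) (s := k) (by omega) (by omega) (by omega)).1]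

/-- For `k ≥ 1`, in a Best-of-(2k+1) game with A serving first, the probability that
A wins under the Standard Rule equals the probability that A wins under the
Catch-Up Rule. -/
theorem SR_eq_CR_winProb (k : ℕ) (hk : 1 ≤ k) (p q : ℝ)
    (hp0 : 0 < p) (hp1 : p < 1) (hq0 : 0 < q) (hq1 : q < 1) :
    winProb p q (k + 1) nextSR (2 * k + 2) 0 0 true
      = winProb p q (k + 1) nextCR (2 * k + 2) 0 0 true :=
  SR_eq_CR_winProb_general k p q
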